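/- arXiv:0904.2257 — 2 statements merged into one kernel-verified Lean document; each statement's English description precedes it below -/
import Mathlib

section
/- Let X be an alphabet with n ≥ 2 letters, let g: X* → X* be a growing morphism, and let w ∈ X*. Then Pref₂({g^i(w) : i ≥ 0}) = Pref₂({g^i(w) : i = 0, 1, …, 3n−2}). -/
open Filter Set

variable {X : Type*}

/-- Apply the morphism with letter images `g` to a word. -/
def applyM (g : X → List X) (w : List X) : List X := w.flatMap g

/-- `iterM g k w` is `g^k(w)`. -/
def iterM (g : X → List X) (k : ℕ) (w : List X) : List X := (applyM g)^[k] w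

/-- The letter map of the composition `g ∘ h` (first `h`, then `g`). -/
def compM (g h : X → List X) : X → List X := fun a => applyM g (h a)

/-- The letter map of the power `g^k`. -/
def powM (g : X → List X) (k : ℕ) : X → List X := fun a => iterM g k [a]

/-- A morphism is primitive if some power maps every letter to a word containing every letter. -/
def Primitive (g : X → List X) : Prop := ∃ k : ℕ, 0 < k ∧ ∀ a b : X, a ∈ iterM g k [b]

/-- `Mg g` is the maximal length of the image of a letter. -/
def Mg [Fintype X] (g : X → List X) : ℕ := Finset.univ.sup fun x => (g x).length

/-- A morphism is growing if the lengths of iterated images of every letter tend to infinity. -/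
def Growing (g : X → List X) : Prop :=
  ∀ x : X, Tendsto (fun i => (iterM g i [x]).length) atTop atTop

/-- `w` is a (finite) prefix of the infinite word `s`. -/
def IsPrefI (w : List X) (s : ℕ → X) : Prop := ∀ i (h : i < w.length), w[i]'h = s i

/-- `v` is a factor of the infinite word `s`. -/
def IsFactorI (v : List X) (s : ℕ → X) : Prop :=
  ∃ j : ℕ, ∀ i (h : i < v.length), v[i]'h = s (j + i)

/-- `g^ω(x)` exists. -/
def OmegaExists (g : X → List X) (x : X) : Prop :=
  [x] <+: g x ∧ Tendsto (fun i => (iterM g i [x]).length) atTop atTop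

/-- `s = g^ω(x)`. -/
def IsOmega (g : X → List X) (x : X) (s : ℕ → X) : Prop :=
  OmegaExists g x ∧ ∀ i : ℕ, IsPrefI (iterM g i [x]) s

/-- `s = u^ω` for the nonempty word `u`. -/
def IsPeriodicWord (s : ℕ → X) (u : List X) : Prop :=
  u ≠ [] ∧ ∀ (i : ℕ) (h : i % u.length < u.length), s i = u[i % u.length]'h

/-- A morphism is looping. -/
def Looping (g : X → List X) : Prop :=
  ∃ k : ℕ, 0 < k ∧ ∃ x : X, ∃ u : List X, ∃ s : ℕ → X,
    IsOmega (powM g k) x s ∧ IsPeriodicWord s u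

/-- A morphism is loop-free if it is not looping. -/
def LoopFree (g : X → List X) : Prop := ¬ Looping g

/-- `p` is a period of `u`. -/
def HasPeriod (u : List X) (p : ℕ) : Prop :=
  0 < p ∧ ∀ i : ℕ, i + p < u.length → u[i + p]? = u[i]?

/-- The smallest period of `u`. -/
noncomputable def PER (u : List X) : ℕ := sInf {p | HasPeriod u p}

/-- A primitive word: nonempty and not a proper power of a shorter word. -/
def PrimitiveWord (u : List X) : Prop :=
  u ≠ [] ∧ ¬∃ (v : List X) (j : ℕ), 2 ≤ j ∧ v.length < u.length ∧
    u = (List.replicate j v).flatten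

/-- `COMP g h` : the set of words whose images under `g` and `h` are prefix-comparable. -/
def COMP (g h : X → List X) : Set (List X) :=
  {w | ∃ u₁ u₂ : List X, applyM g w ++ u₁ = applyM h w ++ u₂}

/-- `BAL g h`. -/
noncomputable def BAL (g h : X → List X) : ℕ∞ :=
  ⨆ (x : X) (k : ℕ),
    ((((applyM g (iterM g k [x])).length : ℤ) -
      ((applyM h (iterM g k [x])).length : ℤ)).natAbs : ℕ∞)

/-- The set of factors of length `q` of the word `w`. -/
def Fq (q : ℕ) (w : List X) : Set (List X) := {v | v.length = q ∧ v <:+: w}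

/-- The set of factors of length `q` of words of `L`. -/
def FqL (q : ℕ) (L : Set (List X)) : Set (List X) := ⋃ w ∈ L, Fq q w

/-- `A n = ⌊9 n³ √(n log n)⌋`. -/
noncomputable def Abound (n : ℕ) : ℕ := ⌊9 * (n : ℝ)^3 * Real.sqrt (n * Real.log n)⌋₊

section Morphisms

variable {g : X → List X}

lemma applyM_cons (g : X → List X) (x : X) (u : List X) :
    applyM g (x :: u) = g x ++ applyM g u := rfl

lemma iterM_succ (g : X → List X) (k : ℕ) (w : List X) :
    iterM g (k + 1) w = applyM g (iterM g k w) :=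
  Function.iterate_succ_apply' (applyM g) k w

lemma iterM_nil (g : X → List X) (k : ℕ) : iterM g k [] = [] :=
  Function.iterate_fixed rfl k

lemma Growing.ne_nil (hg : Growing g) (x : X) : g x ≠ [] := by
  intro hx
  obtain ⟨k, hk⟩ := eventually_atTop.1 ((hg x).eventually_gt_atTop 0)
  have hpos := hk (k + 1) k.le_succ
  rw [iterM, Function.iterate_succ_apply, show applyM g [x] = [] by simp [applyM, hx]] at hpos
  change 0 < (iterM g k []).length at hpos
  simp [iterM_nil] at hpos

lemma length_le_length_applyM (hne : ∀ x, g x ≠ []) (u : List X) :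
    u.length ≤ (applyM g u).length := by
  induction u with
  | nil => simp
  | cons x u ih =>
    have := List.length_pos_iff.2 (hne x)
    simp only [applyM_cons, List.length_cons, List.length_append]
    omega

lemma take_applyM_take (hne : ∀ x, g x ≠ []) (q : ℕ) (u : List X) :
    (applyM g (u.take q)).take q = (applyM g u).take q := by
  rcases le_or_gt u.length q with h | h
  · rw [List.take_of_length_le h]
  · have hlen : q ≤ (applyM g (u.take q)).length :=
      (List.length_take_of_le h.le).symm.le.trans (length_le_length_applyM hne _)
    conv_rhs => rw [← List.take_append_drop q u, applyM, List.flatMap_append, ← applyM]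
    rw [List.take_append_of_le_length hlen]

lemma take_iterM_eq_iterate (hne : ∀ x, g x ≠ []) (q k : ℕ) (w : List X) :
    (iterM g k w).take q = (fun v => (applyM g v).take q)^[k] (w.take q) :=
  Function.Semiconj.iterate_right (fun u => (take_applyM_take hne q u).symm) k w

def firstLetter (g : X → List X) (hne : ∀ x, g x ≠ []) (x : X) : X := (g x).head (hne x)

lemma exists_iterM_cons_eq (hne : ∀ x, g x ≠ []) (x : X) (u : List X) (k : ℕ) :
    ∃ r, iterM g k (x :: u) = (firstLetter g hne)^[k] x :: r := by
  induction k with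
  | zero => exact ⟨u, rfl⟩
  | succ k ih =>
    obtain ⟨r, hr⟩ := ih
    refine ⟨(g ((firstLetter g hne)^[k] x)).tail ++ applyM g r, ?_⟩
    rw [iterM_succ, hr, applyM_cons, Function.iterate_succ_apply', firstLetter,
      ← List.cons_append, List.cons_head_tail]

lemma Growing.exists_two_le_length_of_isPeriodicPt (hg : Growing g) {y : X} {p : ℕ}
    (hp : 0 < p) (hy : Function.IsPeriodicPt (firstLetter g hg.ne_nil) p y) :
    ∃ i < p, 2 ≤ (g ((firstLetter g hg.ne_nil)^[i] y)).length := by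
  set h := firstLetter g hg.ne_nil
  by_contra! hshort
  have hsingleton : ∀ m, g (h^[m] y) = [h^[m + 1] y] := by
    intro m
    have hlen : (g (h^[m] y)).length = 1 := by
      have := List.length_pos_iff.2 (hg.ne_nil (h^[m] y))
      have := hshort (m % p) (Nat.mod_lt m hp)
      rw [hy.iterate_mod_apply] at this
      omega
    obtain ⟨a, ha⟩ := List.length_eq_one_iff.1 hlen
    rw [ha, Function.iterate_succ_apply']
    simp only [h, firstLetter, ha, List.head_cons]
  have hiter : ∀ m, iterM g m [y] = [h^[m] y] := by
    intro m
    induction m with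
    | zero => rfl
    | succ m ih => rw [iterM_succ, ih, applyM_cons, hsingleton]; rfl
  obtain ⟨m, hm⟩ := ((hg y).eventually_gt_atTop 1).exists
  simp [hiter] at hm

end Morphisms

namespace Function

variable {α : Type*}

/-- Pigeonhole on `x, f x, …, f^[card α] x`. -/
lemma exists_isPeriodicPt_iterate [Fintype α] (f : α → α) (x : α) :
    ∃ t p, 0 < p ∧ t + p ≤ Fintype.card α ∧ IsPeriodicPt f p (f^[t] x) := by
  obtain ⟨i, j, hij, hle, heq⟩ : ∃ i j : ℕ, i < j ∧ j ≤ Fintype.card α ∧ f^[i] x = f^[j] x := by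
    obtain ⟨a, b, hab, he⟩ := Fintype.exists_ne_map_eq_of_card_lt
      (fun m : Fin (Fintype.card α + 1) => f^[m] x) (by simp)
    rcases Fin.lt_or_lt_of_ne hab with h | h
    · exact ⟨a, b, h, Nat.lt_succ_iff.1 b.isLt, he⟩
    · exact ⟨b, a, h, Nat.lt_succ_iff.1 a.isLt, he.symm⟩
  refine ⟨i, j - i, by omega, by omega, ?_⟩
  rw [IsPeriodicPt, IsFixedPt, ← iterate_add_apply, Nat.sub_add_cancel hij.le, heq]

lemma exists_iterate_eq_of_isPeriodicPt_iterate {f : α → α} {x : α} {t p : ℕ} (hp : 0 < p)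
    (h : IsPeriodicPt f p (f^[t] x)) (k : ℕ) : ∃ j < t + p, f^[k] x = f^[j] x := by
  rcases lt_or_ge k (t + p) with hk | hk
  · exact ⟨k, hk, rfl⟩
  · refine ⟨(k - t) % p + t, by have := Nat.mod_lt (k - t) hp; omega, ?_⟩
    rw [iterate_add_apply, h.iterate_mod_apply, ← iterate_add_apply, Nat.sub_add_cancel (by omega)]

end Function

open Function in
/-- The first letters of `g^k(w)` form an orbit of `firstLetter g`, which enters a cycle of
length `p` within `card X - p` steps, and some letter `c` of the cycle has `|g(c)| ≥ 2`. Each time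
the first letter is `c`, the next `Pref₂` is `Pref₂(g(c))`; as the `Pref₂(g^k(w))` are themselves an
orbit (of `v ↦ Pref₂(g(v))`), they are periodic from the step after the first `c` on. -/
lemma Growing.exists_take_two_iterM_eq [Fintype X] {g : X → List X}
    (hg : Growing g) (w : List X) (k : ℕ) :
    ∃ j ≤ 2 * Fintype.card X - 1, (iterM g k w).take 2 = (iterM g j w).take 2 := by
  rcases w with _ | ⟨x, u⟩
  · exact ⟨0, Nat.zero_le _, by simp [iterM_nil]⟩
  set h := firstLetter g hg.ne_nil
  obtain ⟨t, p, hp, htp, hcycle⟩ := exists_isPeriodicPt_iterate h x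
  obtain ⟨i, hip, hlong⟩ := hg.exists_two_le_length_of_isPeriodicPt hp hcycle
  have take_two_succ : ∀ m, h^[m] x = h^[i + t] x →
      (iterM g (m + 1) (x :: u)).take 2 = (g (h^[i + t] x)).take 2 := by
    intro m hm
    obtain ⟨r, hr⟩ := exists_iterM_cons_eq hg.ne_nil x u m
    rw [← iterate_add_apply] at hlong
    rw [iterM_succ, hr, applyM_cons, hm, List.take_append_of_le_length hlong]
  set F := fun v : List X => (applyM g v).take 2
  have hF : IsPeriodicPt F p (F^[i + t + 1] ((x :: u).take 2)) := by
    have hback : h^[p + (i + t)] x = h^[i + t] x := by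
      rw [iterate_add_apply, iterate_add_apply, (hcycle.apply_iterate i).eq]
    rw [IsPeriodicPt, IsFixedPt, ← iterate_add_apply, ← take_iterM_eq_iterate hg.ne_nil,
      ← take_iterM_eq_iterate hg.ne_nil, ← add_assoc, take_two_succ _ hback, take_two_succ _ rfl]
  obtain ⟨j, hj, hkj⟩ := exists_iterate_eq_of_isPeriodicPt_iterate hp hF k
  refine ⟨j, by omega, ?_⟩
  rw [take_iterM_eq_iterate hg.ne_nil, take_iterM_eq_iterate hg.ne_nil, hkj]

theorem pref_two_iterates_eq_general {X : Type*} [Fintype X]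
    (n : ℕ) (hn : n = Fintype.card X)
    (g : X → List X) (hg : Growing g) (w : List X) :
    {v | ∃ i : ℕ, v = (iterM g i w).take 2} =
      {v | ∃ i : ℕ, i ≤ 3 * n - 2 ∧ v = (iterM g i w).take 2} := by
  ext v
  constructor
  · rintro ⟨k, rfl⟩
    obtain ⟨j, hj, hkj⟩ := hg.exists_take_two_iterM_eq w k
    exact ⟨j, by omega, hkj⟩
  · rintro ⟨i, -, rfl⟩
    exact ⟨i, rfl⟩

/-- For a growing morphism `g` on an alphabet with `n ≥ 2` letters
and any word `w`, `Pref₂({g^i(w) : i ≥ 0}) = Pref₂({g^i(w) : 0 ≤ i ≤ 3n-2})`. -/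
theorem pref_two_iterates_eq {X : Type*} [Fintype X]
    (n : ℕ) (hn : n = Fintype.card X) (hn2 : 2 ≤ n)
    (g : X → List X) (hg : Growing g) (w : List X) :
    {v | ∃ i : ℕ, v = (iterM g i w).take 2} =
      {v | ∃ i : ℕ, i ≤ 3 * n - 2 ∧ v = (iterM g i w).take 2} :=
  pref_two_iterates_eq_general n hn g hg w
end

section
/- Let g, h: X* → X* be morphisms and let x ∈ X be a letter such that g^ω(x), h^ω(x), (gh)^ω(x) and (hg)^ω(x) all exist. Then g^ω(x) = h^ω(x) if and only if (gh)^ω(x) = (hg)^ω(x). -/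
open Filter Set

variable {X : Type*}

lemma applyM_append (g : X → List X) (u v : List X) :
    applyM g (u ++ v) = applyM g u ++ applyM g v := by
  simp [applyM]

lemma applyM_prefix (g : X → List X) {u v : List X} (h : u <+: v) :
    applyM g u <+: applyM g v := by
  obtain ⟨w, rfl⟩ := h
  exact ⟨applyM g w, (applyM_append g u w).symm⟩

lemma applyM_compM (g h : X → List X) (w : List X) :
    applyM (compM g h) w = applyM g (applyM h w) := by
  induction w with
  | nil => rfl
  | cons a w ih => simp [applyM, compM] at *; simp [ih]

lemma iterM_prefix (g : X → List X) (i : ℕ) {u v : List X} (h : u <+: v) :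
    iterM g i u <+: iterM g i v := by
  induction i generalizing u v with
  | zero => exact h
  | succ i ih =>
    show (applyM g)^[i] (applyM g u) <+: (applyM g)^[i] (applyM g v)
    exact ih (applyM_prefix g h)

lemma prefI_of_prefix {p q : List X} {t : ℕ → X} (hpq : p <+: q) (hq : IsPrefI q t) :
    IsPrefI p t := by
  intro i hi
  obtain ⟨w, rfl⟩ := hpq
  rw [← hq i (by simp; omega)]
  exact (List.getElem_append_left hi).symm

lemma prefix_of_prefI {p q : List X} {t : ℕ → X} (hp : IsPrefI p t) (hq : IsPrefI q t)
    (hlen : p.length ≤ q.length) : p <+: q := by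
  have : p = q.take p.length := by
    apply List.ext_getElem
    · simp [Nat.min_eq_left hlen]
    · intro i h1 h2
      rw [List.getElem_take, hp i h1, hq i (by omega)]
  rw [this]
  exact List.take_prefix _ _

lemma omega_unique {G : X → List X} {x : X} {s t : ℕ → X}
    (hs : IsOmega G x s) (ht : ∀ i, IsPrefI (iterM G i [x]) t) : s = t := by
  funext n
  obtain ⟨i, hi⟩ := (hs.1.2.eventually_gt_atTop n).exists
  rw [← hs.2 i n hi, ht i n hi]

lemma prefI_iter {G : X → List X} {x : X} {t : ℕ → X} (h0 : t 0 = x)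
    (hstep : ∀ p, IsPrefI p t → IsPrefI (applyM G p) t) :
    ∀ i, IsPrefI (iterM G i [x]) t := by
  intro i
  induction i with
  | zero =>
    intro j hj
    simp only [iterM, Function.iterate_zero, id] at hj ⊢
    simp only [List.length_singleton] at hj
    interval_cases j
    simpa using h0.symm
  | succ i ih =>
    show IsPrefI ((applyM G)^[i+1] [x]) t
    rw [Function.iterate_succ_apply']
    exact hstep _ ih

lemma transfer {G F : X → List X} {x : X} {s t : ℕ → X}
    (hG : IsOmega G x s)
    (hstep : ∀ i, IsPrefI (applyM F (iterM G i [x])) t) :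
    ∀ p, IsPrefI p s → IsPrefI (applyM F p) t := by
  intro p hp
  obtain ⟨i, hi⟩ := (hG.1.2.eventually_ge_atTop p.length).exists
  exact prefI_of_prefix (applyM_prefix F (prefix_of_prefI hp (hG.2 i) hi)) (hstep i)

lemma applyM_iter_comp (g h : X → List X) (i : ℕ) (w : List X) :
    applyM g (iterM (compM h g) i w) = iterM (compM g h) i (applyM g w) := by
  induction i generalizing w with
  | zero => rfl
  | succ i ih =>
    show applyM g ((applyM (compM h g))^[i] (applyM (compM h g) w)) =
      (applyM (compM g h))^[i] (applyM (compM g h) (applyM g w))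
    rw [show applyM (compM g h) (applyM g w) = applyM g (applyM (compM h g) w) by
      rw [applyM_compM, applyM_compM]]
    exact ih _

lemma applyM_singleton (g : X → List X) (x : X) : applyM g [x] = g x := by
  simp [applyM]

lemma head_omega {G : X → List X} {x : X} {s : ℕ → X} (hG : IsOmega G x s) : s 0 = x := by
  have := hG.2 0 0 (by simp [iterM])
  simpa [iterM] using this.symm

lemma iter_step_pref {G : X → List X} {x : X} {s : ℕ → X} (hG : IsOmega G x s) (i : ℕ) :
    IsPrefI (applyM G (iterM G i [x])) s := by
  have := hG.2 (i + 1)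
  rwa [iterM, Function.iterate_succ_apply', ← iterM] at this

lemma comp_key_pref {g h : X → List X} {x : X} {sgh : ℕ → X}
    (hgh : IsOmega (compM g h) x sgh) (hx_h : [x] <+: h x) (i : ℕ) :
    IsPrefI (applyM g (iterM (compM h g) i [x])) sgh := by
  rw [applyM_iter_comp]
  refine prefI_of_prefix ?_ (hgh.2 (i + 1))
  show (applyM (compM g h))^[i] (applyM g [x]) <+: (applyM (compM g h))^[i+1] [x]
  rw [Function.iterate_succ_apply]
  refine iterM_prefix (compM g h) i ?_
  rw [applyM_singleton, applyM_singleton]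
  show g x <+: applyM g (h x)
  have := applyM_prefix g hx_h
  rwa [applyM_singleton] at this

/-- Suppose `g^ω(x)`, `h^ω(x)`, `(gh)^ω(x)` and `(hg)^ω(x)` all exist.
Then `g^ω(x) = h^ω(x)` iff `(gh)^ω(x) = (hg)^ω(x)`. -/
theorem omega_eq_iff_comp_omega_eq {X : Type*}
    (g h : X → List X) (x : X) (sg sh sgh shg : ℕ → X)
    (hg : IsOmega g x sg) (hh : IsOmega h x sh)
    (hgh : IsOmega (compM g h) x sgh) (hhg : IsOmega (compM h g) x shg) :
    sg = sh ↔ sgh = shg := by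
  constructor
  · intro heq
    subst heq
    have step_g : ∀ p, IsPrefI p sg → IsPrefI (applyM g p) sg :=
      transfer hg (iter_step_pref hg)
    have step_h : ∀ p, IsPrefI p sg → IsPrefI (applyM h p) sg :=
      transfer hh (iter_step_pref hh)
    have e1 : sgh = sg := omega_unique hgh (prefI_iter (head_omega hg)
      (fun p hp => by rw [applyM_compM]; exact step_g _ (step_h _ hp)))
    have e2 : shg = sg := omega_unique hhg (prefI_iter (head_omega hg)
      (fun p hp => by rw [applyM_compM]; exact step_h _ (step_g _ hp)))
    rw [e1, e2]
  · intro heq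
    subst heq
    have step_g : ∀ p, IsPrefI p sgh → IsPrefI (applyM g p) sgh :=
      transfer hhg (comp_key_pref hgh hh.1.1)
    have step_h : ∀ p, IsPrefI p sgh → IsPrefI (applyM h p) sgh :=
      transfer hgh (comp_key_pref hhg hg.1.1)
    have e1 : sg = sgh := omega_unique hg (prefI_iter (head_omega hgh) step_g)
    have e2 : sh = sgh := omega_unique hh (prefI_iter (head_omega hgh) step_h)
    rw [e1, e2]
end
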